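/- arXiv:1711.01306 — 2 statements merged into one kernel-verified Lean document; each statement's English description precedes it below -/
import Mathlib

section
/- (Theorem 1, case b = 1.) Let (Ω, P) be a probability space, n a positive even integer, y : Fin n → Ω → ℝ independent random variables each with Gaussian law of mean μ and variance σ² (σ > 0), p : Fin n → ℝ a balanced ±1 key, and β > 0. Let the hidden bit be b = 1, define w t = y t + β·p t and the extracted bit b̃(ω) = (1/(β·n)) · ∑_t (w t ω) · p t. Then the bit extraction error probability satisfies P(b̃ < 0) = (1/2)·erfc(β·√n/(σ·√2)), where erfc x = (2/√π) · ∫_x^∞ exp(−t²) dt. -/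
/-!
Multiplying the watermarked samples by the key undoes the spreading: `w t * p t = p t * y t + β`
because `p t ^ 2 = 1`. These are independent Gaussians of variance `σ²` whose means sum to `n β`
(the key is balanced, so `∑ p t = 0`), hence `∑ w t * p t ~ N(n β, n σ²)`, and the decision
errs exactly when this sum is negative. Standardising, `(n β - x) / √(2 n σ²)` has law
`N(0, 1/2)`, whose density is `exp(-x²) / √π`, so the error probability is
`½ erfc (n β / √(2 n σ²))`.
-/

open MeasureTheory ProbabilityTheory Finset

noncomputable def erfc (x : ℝ) : ℝ :=
  (2 / Real.sqrt Real.pi) * ∫ t in Set.Ioi x, Real.exp (-t ^ 2)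

open scoped NNReal
open Real

lemma Finset.sum_eq_zero_of_card_filter_eq {ι : Type*} [Fintype ι] {p : ι → ℝ}
    (hp : ∀ t, p t = 1 ∨ p t = -1) (hbal : #{t | p t = 1} = #{t | p t = -1}) :
    ∑ t, p t = 0 := by
  have hsplit : ∀ t, p t = (if p t = 1 then 1 else 0) - (if p t = -1 then 1 else 0) := by
    intro t
    rcases hp t with h | h <;> norm_num [h]
  rw [sum_congr rfl fun t _ => hsplit t, sum_sub_distrib, ← sum_filter, ← sum_filter]
  simp [hbal]

namespace ProbabilityTheory

lemma gaussianReal_map_const_mul_add {μ : ℝ} {v : ℝ≥0} (c b : ℝ) :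
    (gaussianReal μ v).map (fun x => c * x + b)
      = gaussianReal (c * μ + b) (.mk (c ^ 2) (sq_nonneg c) * v) := by
  rw [show (fun x => c * x + b) = (· + b) ∘ (c * ·) from rfl,
    ← Measure.map_map (by fun_prop) (by fun_prop), gaussianReal_map_const_mul,
    gaussianReal_map_add_const]

lemma gaussianReal_Ioi_eq_erfc (c : ℝ) :
    gaussianReal 0 2⁻¹ (Set.Ioi c) = ENNReal.ofReal ((1 / 2) * erfc c) := by
  have hpdf : ∀ x, gaussianPDFReal 0 2⁻¹ x = (√π)⁻¹ * exp (-x ^ 2) := by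
    intro x
    simp only [gaussianPDFReal, NNReal.coe_inv, NNReal.coe_ofNat, sub_zero]
    congr 3 <;> field_simp
  rw [gaussianReal_apply_eq_integral _ (by norm_num)]
  simp_rw [hpdf]
  rw [integral_const_mul, erfc]
  ring_nf

lemma gaussianReal_Iio_zero (m : ℝ) {v : ℝ≥0} (hv : v ≠ 0) :
    gaussianReal m v (Set.Iio 0) = ENNReal.ofReal ((1 / 2) * erfc (m / √(2 * v))) := by
  set s := √(2 * v)
  have hs : 0 < s := Real.sqrt_pos.mpr (by positivity)
  have hstd : (gaussianReal m v).map (fun x => (m - x) / s) = gaussianReal 0 2⁻¹ := by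
    rw [show (fun x => (m - x) / s) = (· / s) ∘ (m - ·) from rfl,
      ← Measure.map_map (by fun_prop) (by fun_prop), gaussianReal_map_const_sub,
      gaussianReal_map_div_const, sub_self, zero_div]
    congr
    ext
    simp only [s, NNReal.coe_div, NNReal.coe_mk, NNReal.coe_inv, NNReal.coe_ofNat,
      Real.sq_sqrt (by positivity : (0 : ℝ) ≤ 2 * v)]
    field_simp
  have hpre : (fun x => (m - x) / s) ⁻¹' Set.Ioi (m / s) = Set.Iio 0 := by
    ext x
    simp only [Set.mem_preimage, Set.mem_Ioi, Set.mem_Iio, div_lt_div_iff_of_pos_right hs]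
    constructor <;> intro h <;> linarith
  rw [← hpre, ← Measure.map_apply (by fun_prop) measurableSet_Ioi, hstd, gaussianReal_Ioi_eq_erfc]

variable {Ω : Type*} [MeasurableSpace Ω] {P : Measure Ω} [IsProbabilityMeasure P]

lemma iIndepFun.map_sum_eq_gaussianReal {ι : Type*} {X : ι → Ω → ℝ} (hX : iIndepFun X P)
    {m : ι → ℝ} {v : ι → ℝ≥0} (hlaw : ∀ i, P.map (X i) = gaussianReal (m i) (v i))
    (s : Finset ι) :
    P.map (∑ i ∈ s, X i) = gaussianReal (∑ i ∈ s, m i) (∑ i ∈ s, v i) := by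
  classical
  have hXm : ∀ i, AEMeasurable (X i) P := fun i =>
    AEMeasurable.of_map_ne_zero (by simp [hlaw i, NeZero.ne])
  induction s using Finset.induction with
  | empty => simp [Pi.zero_def, Measure.map_const, gaussianReal_zero_var]
  | insert i s hi ih =>
    rw [sum_insert hi, sum_insert hi, sum_insert hi, add_comm (X i), add_comm (m i),
      add_comm (v i)]
    exact gaussianReal_add_gaussianReal_of_indepFun
      (hX.indepFun_finsetSum_of_notMem₀ hXm hi) ih (hlaw i)

lemma iIndepFun.map_sum_despread_eq_gaussianReal {ι : Type*} [Fintype ι] {y : ι → Ω → ℝ}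
    (hindep : iIndepFun y P) {μ : ℝ} {v : ℝ≥0} (hlaw : ∀ t, P.map (y t) = gaussianReal μ v)
    {p : ι → ℝ} (hp : ∀ t, p t = 1 ∨ p t = -1) (hbal : #{t | p t = 1} = #{t | p t = -1})
    (β : ℝ) :
    P.map (∑ t, fun ω => (y t ω + β * p t) * p t)
      = gaussianReal (Fintype.card ι • β) (Fintype.card ι • v) := by
  have hp2 : ∀ t, p t ^ 2 = 1 := fun t => by rcases hp t with h | h <;> norm_num [h]
  have hdespread : (fun t ω => (y t ω + β * p t) * p t)
      = fun t => (fun x => p t * x + β) ∘ y t := by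
    funext t ω
    simp only [Function.comp_apply]
    linear_combination β * hp2 t
  have hym : ∀ t, AEMeasurable (y t) P := fun t =>
    AEMeasurable.of_map_ne_zero (by simp [hlaw t, NeZero.ne])
  have hlaw' : ∀ t, P.map (fun ω => (y t ω + β * p t) * p t) = gaussianReal (p t * μ + β) v := by
    intro t
    rw [congrFun hdespread t, ← AEMeasurable.map_map_of_aemeasurable (by fun_prop) (hym t),
      hlaw, gaussianReal_map_const_mul_add]
    congr
    ext
    simp [hp2]
  have hindep' := hdespread ▸ hindep.comp _ fun t => by fun_prop
  rw [hindep'.map_sum_eq_gaussianReal hlaw' univ, sum_add_distrib, ← sum_mul,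
    sum_eq_zero_of_card_filter_eq hp hbal, zero_mul, zero_add, sum_const, sum_const, card_univ]

end ProbabilityTheory

theorem bit_extraction_error_pos_bit_general
    {Ω : Type*} [MeasurableSpace Ω] (P : Measure Ω) [IsProbabilityMeasure P]
    (n : ℕ) (hn : 0 < n)
    (y : Fin n → Ω → ℝ)
    (hindep : iIndepFun y P)
    (μ σ : ℝ) (hσ : 0 < σ)
    (hlaw : ∀ t, Measure.map (y t) P = gaussianReal μ ⟨σ ^ 2, sq_nonneg σ⟩)
    (p : Fin n → ℝ) (hp : ∀ t, p t = 1 ∨ p t = -1)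
    (hbal : (univ.filter fun t => p t = 1).card
          = (univ.filter fun t => p t = -1).card)
    (β : ℝ) (hβ : 0 < β)
    (w : Fin n → Ω → ℝ) (hw : ∀ t ω, w t ω = y t ω + β * p t)
    (btilde : Ω → ℝ) (hb : ∀ ω, btilde ω = (1 / (β * n)) * ∑ t, w t ω * p t) :
    P {ω | btilde ω < 0}
      = ENNReal.ofReal
          ((1 / 2) * erfc (β * Real.sqrt n / (σ * Real.sqrt 2))) := by
  set v : ℝ≥0 := ⟨σ ^ 2, sq_nonneg σ⟩
  have hvσ : (v : ℝ) = σ ^ 2 := rfl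
  have hsum := hindep.map_sum_despread_eq_gaussianReal hlaw hp hbal β
  rw [Fintype.card_fin] at hsum
  have hevent : {ω | btilde ω < 0}
      = (∑ t, fun ω => (y t ω + β * p t) * p t) ⁻¹' Set.Iio 0 := by
    ext ω
    simp only [Set.mem_ofPred_eq, Set.mem_preimage, Set.mem_Iio, Finset.sum_apply, hb, hw]
    exact smul_neg_iff_of_pos_left (α := ℝ) (by positivity)
  have hvar : n • v ≠ 0 := smul_ne_zero hn.ne' (NNReal.coe_ne_zero.mp (hvσ ▸ by positivity))
  have hsqrt : √(2 * ((n • v : ℝ≥0) : ℝ)) = σ * √2 * √n := by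
    rw [← Real.sqrt_sq (by positivity : 0 ≤ σ * √2 * √n)]
    congr 1
    rw [NNReal.coe_nsmul, nsmul_eq_mul, mul_pow, mul_pow, Real.sq_sqrt zero_le_two,
      Real.sq_sqrt n.cast_nonneg, hvσ]
    ring
  rw [hevent, ← Measure.map_apply_of_aemeasurable
      (AEMeasurable.of_map_ne_zero (by simp [hsum, NeZero.ne])) measurableSet_Iio,
    hsum, gaussianReal_Iio_zero _ hvar, hsqrt, nsmul_eq_mul]
  congr 3
  field_simp
  rw [Real.sq_sqrt n.cast_nonneg]

/-- Theorem 1 of the paper, case `b = 1`. With hidden bit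
`b = 1`, the bit extraction error probability of spread spectrum watermarking
is `P(b̃ < 0) = (1/2) erfc (β √n / (σ √2))`. -/
theorem bit_extraction_error_pos_bit
    {Ω : Type*} [MeasurableSpace Ω] (P : Measure Ω) [IsProbabilityMeasure P]
    (n : ℕ) (hn : 0 < n) (hneven : Even n)
    (y : Fin n → Ω → ℝ) (hmeas : ∀ t, Measurable (y t))
    (hindep : iIndepFun y P)
    (μ σ : ℝ) (hσ : 0 < σ)
    (hlaw : ∀ t, Measure.map (y t) P = gaussianReal μ ⟨σ ^ 2, sq_nonneg σ⟩)
    (p : Fin n → ℝ) (hp : ∀ t, p t = 1 ∨ p t = -1)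
    (hbal : (univ.filter fun t => p t = 1).card
          = (univ.filter fun t => p t = -1).card)
    (β : ℝ) (hβ : 0 < β)
    (w : Fin n → Ω → ℝ) (hw : ∀ t ω, w t ω = y t ω + β * p t)
    (btilde : Ω → ℝ) (hb : ∀ ω, btilde ω = (1 / (β * n)) * ∑ t, w t ω * p t) :
    P {ω | btilde ω < 0}
      = ENNReal.ofReal
          ((1 / 2) * erfc (β * Real.sqrt n / (σ * Real.sqrt 2))) :=
  bit_extraction_error_pos_bit_general P n hn y hindep μ σ hσ hlaw p hp hbal β hβ w hw btilde hb
end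

section
/- (Theorem 1, case b = −1.) Let (Ω, P) be a probability space, n a positive even integer, y : Fin n → Ω → ℝ independent random variables each with Gaussian law of mean μ and variance σ² (σ > 0), p : Fin n → ℝ a balanced ±1 key, and β > 0. Let the hidden bit be b = −1, define w t = y t − β·p t and the extracted bit b̃(ω) = (1/(β·n)) · ∑_t (w t ω) · p t. Then P(b̃ > 0) = (1/2)·erfc(β·√n/(σ·√2)), where erfc x = (2/√π) · ∫_x^∞ exp(−t²) dt. -/
/-!
Since `p t ^ 2 = 1`, correlating with the key gives `β n · b̃ = ∑ t, p t * y t - β n`.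
Each `p t * y t` is Gaussian with mean `p t * μ` and variance `σ²`, and the balanced key makes
the means cancel, so by independence `∑ t, p t * y t` is centred Gaussian with variance `n σ²`.
The error event is its tail beyond `β n`, which the substitution `x = √(2 n σ²) u` turns into
an `erfc`.
-/

open MeasureTheory ProbabilityTheory Finset

open scoped NNReal

lemma gaussianReal_map_const_mul_of_sq_eq_one {μ c : ℝ} {v : ℝ≥0} (hc : c ^ 2 = 1) :
    (gaussianReal μ v).map (c * ·) = gaussianReal (c * μ) v := by
  rw [gaussianReal_map_const_mul]
  congr
  ext
  simp [hc]

lemma map_finsetSum_eq_gaussianReal {Ω ι : Type*} [MeasurableSpace Ω] {P : Measure Ω}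
    [IsProbabilityMeasure P] {X : ι → Ω → ℝ} (hmeas : ∀ i, Measurable (X i))
    (hindep : iIndepFun X P) {m : ι → ℝ} {v : ι → ℝ≥0}
    (hlaw : ∀ i, P.map (X i) = gaussianReal (m i) (v i)) (s : Finset ι) :
    P.map (fun ω => ∑ i ∈ s, X i ω) = gaussianReal (∑ i ∈ s, m i) (∑ i ∈ s, v i) := by
  classical
  induction s using Finset.induction_on with
  | empty => simp [gaussianReal_zero_var]
  | insert a s ha ih =>
    have hindep_a : IndepFun (X a) (fun ω => ∑ i ∈ s, X i ω) P := by
      simpa only [← Finset.sum_fn] using (hindep.indepFun_finsetSum_of_notMem hmeas ha).symm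
    simp only [Finset.sum_insert ha]
    exact gaussianReal_add_gaussianReal_of_indepFun hindep_a (hlaw a) ih

lemma gaussianReal_zero_Ioi {v : ℝ≥0} (hv : v ≠ 0) (c : ℝ) :
    gaussianReal 0 v (Set.Ioi c) = ENNReal.ofReal (1 / 2 * erfc (c / √(2 * v))) := by
  have hv_pos : (0 : ℝ) < v := NNReal.coe_pos.2 (pos_iff_ne_zero.2 hv)
  have hscale : (0 : ℝ) < (√(2 * v))⁻¹ := by positivity
  have hpdf : ∀ x, gaussianPDFReal 0 v x
      = (√Real.pi)⁻¹ * (√(2 * v))⁻¹ * Real.exp (-((√(2 * v))⁻¹ * x) ^ 2) := by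
    intro x
    have hsq : ((√(2 * (v : ℝ)))⁻¹) ^ 2 = (2 * (v : ℝ))⁻¹ := by
      rw [← Real.sqrt_inv, Real.sq_sqrt (by positivity)]
    rw [gaussianPDFReal, sub_zero, mul_pow, hsq, mul_assoc 2 Real.pi,
      mul_left_comm 2 Real.pi, Real.sqrt_mul Real.pi_pos.le, mul_inv]
    congr 2
    field_simp
  rw [gaussianReal_apply_eq_integral _ hv, funext hpdf, integral_const_mul,
    integral_comp_mul_left_Ioi (fun t => Real.exp (-t ^ 2)) c hscale, smul_eq_mul, erfc,
    inv_mul_eq_div]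
  congr 1
  field_simp

section Key

variable {ι : Type*} [Fintype ι] {p : ι → ℝ}

lemma sum_eq_zero_of_card_eq (hp : ∀ i, p i = 1 ∨ p i = -1)
    (hbal : #{i | p i = 1} = #{i | p i = -1}) :
    ∑ i, p i = 0 := by
  have hneg : univ.filter (fun i => ¬p i = 1) = univ.filter (fun i => p i = -1) := by
    ext i
    rcases hp i with h | h <;> norm_num [h]
  rw [← sum_filter_add_sum_filter_not univ (fun i => p i = 1), hneg,
    sum_congr rfl fun i hi => (mem_filter.1 hi).2, sum_congr rfl fun i hi => (mem_filter.1 hi).2]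
  simp [hbal]

lemma sum_sub_mul_mul_eq_of_sq_eq_one (hp : ∀ i, p i ^ 2 = 1) (x : ι → ℝ) (β : ℝ) :
    ∑ i, (x i - β * p i) * p i = ∑ i, p i * x i - β * Fintype.card ι := by
  simp only [sub_mul, sum_sub_distrib, mul_assoc, ← sq, hp]
  simp [mul_comm]

lemma map_sum_mul_eq_gaussianReal {Ω : Type*} [MeasurableSpace Ω] {P : Measure Ω}
    [IsProbabilityMeasure P] {y : ι → Ω → ℝ} (hmeas : ∀ i, Measurable (y i))
    (hindep : iIndepFun y P) {μ : ℝ} {v : ℝ≥0}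
    (hlaw : ∀ i, P.map (y i) = gaussianReal μ v) (hp : ∀ i, p i = 1 ∨ p i = -1)
    (hbal : #{i | p i = 1} = #{i | p i = -1}) :
    P.map (fun ω => ∑ i, p i * y i ω) = gaussianReal 0 (Fintype.card ι • v) := by
  have hlaw_mul (i : ι) : P.map (fun ω => p i * y i ω) = gaussianReal (p i * μ) v := by
    change P.map ((p i * ·) ∘ y i) = _
    rw [← Measure.map_map (measurable_const_mul _) (hmeas i), hlaw,
      gaussianReal_map_const_mul_of_sq_eq_one (by rcases hp i with h | h <;> simp [h])]
  rw [map_finsetSum_eq_gaussianReal (fun i => (hmeas i).const_mul _)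
    (hindep.comp (fun i x => p i * x) fun i => measurable_const_mul _) hlaw_mul, ← sum_mul,
    sum_eq_zero_of_card_eq hp hbal, zero_mul, sum_const, card_univ]

end Key

lemma mul_nat_div_sqrt_two_mul_nat_mul_sq {σ : ℝ} (hσ : 0 < σ) (β : ℝ) (n : ℕ) :
    β * n / √(2 * (n * σ ^ 2)) = β * √n / (σ * √2) := by
  rw [show 2 * (n * σ ^ 2) = σ ^ 2 * 2 * n by ring, Real.sqrt_mul (by positivity),
    Real.sqrt_mul (sq_nonneg σ), Real.sqrt_sq hσ.le]
  field_simp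
  rw [mul_div_assoc, Real.div_sqrt]

theorem bit_extraction_error_neg_bit_general
    {Ω : Type*} [MeasurableSpace Ω] (P : Measure Ω) [IsProbabilityMeasure P]
    (n : ℕ) (hn : 0 < n)
    (y : Fin n → Ω → ℝ) (hmeas : ∀ t, Measurable (y t))
    (hindep : iIndepFun y P)
    (μ σ : ℝ) (hσ : 0 < σ)
    (hlaw : ∀ t, Measure.map (y t) P = gaussianReal μ ⟨σ ^ 2, sq_nonneg σ⟩)
    (p : Fin n → ℝ) (hp : ∀ t, p t = 1 ∨ p t = -1)
    (hbal : (univ.filter fun t => p t = 1).card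
          = (univ.filter fun t => p t = -1).card)
    (β : ℝ) (hβ : 0 < β)
    (w : Fin n → Ω → ℝ) (hw : ∀ t ω, w t ω = y t ω - β * p t)
    (btilde : Ω → ℝ) (hb : ∀ ω, btilde ω = (1 / (β * n)) * ∑ t, w t ω * p t) :
    P {ω | 0 < btilde ω}
      = ENNReal.ofReal
          ((1 / 2) * erfc (β * Real.sqrt n / (σ * Real.sqrt 2))) := by
  have hp_sq (t : Fin n) : p t ^ 2 = 1 := by rcases hp t with h | h <;> simp [h]
  set S : Ω → ℝ := fun ω => ∑ t, p t * y t ω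
  have hS_meas : Measurable S := Finset.measurable_sum _ fun t _ => (hmeas t).const_mul (p t)
  have hevent : {ω | 0 < btilde ω} = S ⁻¹' Set.Ioi (β * n) := by
    ext ω
    simp only [Set.mem_ofPred_eq, Set.mem_preimage, Set.mem_Ioi, hb, hw,
      sum_sub_mul_mul_eq_of_sq_eq_one hp_sq, Fintype.card_fin,
      mul_pos_iff_of_pos_left (by positivity : 0 < 1 / (β * n)), sub_pos, S]
  set v : ℝ≥0 := ⟨σ ^ 2, sq_nonneg σ⟩
  have hvar : n • v ≠ 0 := smul_ne_zero hn.ne' (NNReal.coe_ne_zero.1 (pow_ne_zero 2 hσ.ne'))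
  rw [hevent, ← Measure.map_apply hS_meas measurableSet_Ioi,
    map_sum_mul_eq_gaussianReal hmeas hindep hlaw hp hbal, Fintype.card_fin,
    gaussianReal_zero_Ioi hvar, NNReal.coe_nsmul, nsmul_eq_mul, show (v : ℝ) = σ ^ 2 from rfl,
    mul_nat_div_sqrt_two_mul_nat_mul_sq hσ]

/-- Theorem 1 of the paper, case `b = -1`. With hidden bit
`b = -1`, the bit extraction error probability of spread spectrum watermarking
is `P(b̃ > 0) = (1/2) erfc (β √n / (σ √2))`. -/
theorem bit_extraction_error_neg_bit
    {Ω : Type*} [MeasurableSpace Ω] (P : Measure Ω) [IsProbabilityMeasure P]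
    (n : ℕ) (hn : 0 < n) (hneven : Even n)
    (y : Fin n → Ω → ℝ) (hmeas : ∀ t, Measurable (y t))
    (hindep : iIndepFun y P)
    (μ σ : ℝ) (hσ : 0 < σ)
    (hlaw : ∀ t, Measure.map (y t) P = gaussianReal μ ⟨σ ^ 2, sq_nonneg σ⟩)
    (p : Fin n → ℝ) (hp : ∀ t, p t = 1 ∨ p t = -1)
    (hbal : (univ.filter fun t => p t = 1).card
          = (univ.filter fun t => p t = -1).card)
    (β : ℝ) (hβ : 0 < β)
    (w : Fin n → Ω → ℝ) (hw : ∀ t ω, w t ω = y t ω - β * p t)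
    (btilde : Ω → ℝ) (hb : ∀ ω, btilde ω = (1 / (β * n)) * ∑ t, w t ω * p t) :
    P {ω | 0 < btilde ω}
      = ENNReal.ofReal
          ((1 / 2) * erfc (β * Real.sqrt n / (σ * Real.sqrt 2))) :=
  bit_extraction_error_neg_bit_general P n hn y hmeas hindep μ σ hσ hlaw p hp hbal β hβ w hw btilde
    hb
end
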